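/- arXiv:1802.09570 — 2 statements merged into one kernel-verified Lean document; each statement's English description precedes it below -/
import Mathlib

section
/- Let u⁰ > 0 and let β ∈ C¹((0,∞)) be strictly increasing with β' non-increasing and positive, and let γ : [0,∞) → [0,∞) be monotone continuous with γ(s) = 0 iff s = 0. Let u, v ∈ C([0,∞)) ∩ C¹((0,∞)) be non-decreasing with u(0) = u⁰ < v(0) = v⁰, and suppose μ > 0 and for all t > 0: μγ(u'(t)) + β'(u(t))u'(t) ≤ γ(u(t)) and μγ(v'(t)) + β'(v(t))v'(t) ≥ γ(v(t)). Then u(t) < v(t) for all t > 0. -/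
open Set Filter
open scoped Topology

/-- Comparison principle for sub- and supersolutions of the regularized ODE
`μγ(z') + β'(z)z' = γ(z)`: if `u(0) = u⁰ < v⁰ = v(0)` with `u⁰ > 0`, `u,v` non-decreasing,
and `u` is a subsolution, `v` a supersolution, then `u(t) < v(t)` for all `t > 0`. -/
theorem stmt_6 (β β' γ : ℝ → ℝ) (μ u0 v0 : ℝ)
    (hμ : 0 < μ) (hu0 : 0 < u0) (huv0 : u0 < v0)
    (hβderiv : ∀ s : ℝ, 0 < s → HasDerivAt β (β' s) s)
    (hβ'cont : ContinuousOn β' (Set.Ioi 0))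
    (hβmono : StrictMonoOn β (Set.Ioi 0))
    (hβ'anti : AntitoneOn β' (Set.Ioi 0)) (hβ'pos : ∀ s : ℝ, 0 < s → 0 < β' s)
    (hγmono : MonotoneOn γ (Set.Ici 0)) (hγcont : ContinuousOn γ (Set.Ici 0))
    (hγnonneg : ∀ s : ℝ, 0 ≤ s → 0 ≤ γ s)
    (hγzero : ∀ s : ℝ, 0 ≤ s → (γ s = 0 ↔ s = 0))
    (u v u' v' : ℝ → ℝ)
    (hucont : ContinuousOn u (Set.Ici 0)) (hvcont : ContinuousOn v (Set.Ici 0))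
    (hu' : ∀ t : ℝ, 0 < t → HasDerivAt u (u' t) t)
    (hv' : ∀ t : ℝ, 0 < t → HasDerivAt v (v' t) t)
    (hu'cont : ContinuousOn u' (Set.Ioi 0)) (hv'cont : ContinuousOn v' (Set.Ioi 0))
    (humono : MonotoneOn u (Set.Ici 0)) (hvmono : MonotoneOn v (Set.Ici 0))
    (hu0eq : u 0 = u0) (hv0eq : v 0 = v0)
    (hineq1 : ∀ t : ℝ, 0 < t → μ * γ (u' t) + β' (u t) * u' t ≤ γ (u t))
    (hineq2 : ∀ t : ℝ, 0 < t → γ (v t) ≤ μ * γ (v' t) + β' (v t) * v' t) :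
    ∀ t : ℝ, 0 < t → u t < v t := by
  have hγ0 : γ 0 = 0 := (hγzero 0 le_rfl).mpr rfl
  have hγpos : ∀ z : ℝ, 0 < z → 0 < γ z := by
    intro z hz
    rcases lt_or_eq_of_le (hγnonneg z hz.le) with h | h
    · exact h
    · exact absurd ((hγzero z hz.le).mp h.symm) (ne_of_gt hz)
  -- strict monotonicity of `p ↦ μ γ p + β' z * p` on nonneg reals
  have Fmono : ∀ z p q : ℝ, 0 < z → 0 ≤ p → p < q →
      μ * γ p + β' z * p < μ * γ q + β' z * q := by
    intro z p q hz hp hpq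
    have h1 : γ p ≤ γ q := hγmono hp (hp.trans hpq.le) hpq.le
    have h2 := hβ'pos z hz
    nlinarith
  -- existence of the root P z
  have hex : ∀ z : ℝ, ∃ q : ℝ, 0 < z → (0 ≤ q ∧ μ * γ q + β' z * q = γ z) := by
    intro z
    by_cases hz : 0 < z
    · have hβ'z := hβ'pos z hz
      set M := γ z / β' z with hM
      have hM0 : 0 ≤ M := div_nonneg (hγnonneg z hz.le) hβ'z.le
      have hcont : ContinuousOn (fun q => μ * γ q + β' z * q) (Set.Icc 0 M) := by
        refine ((continuousOn_const.mul (hγcont.mono ?_)).add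
          (continuousOn_const.mul continuousOn_id))
        intro x hx; exact hx.1
      have hsub := intermediate_value_Icc hM0 hcont
      have hβ'M : β' z * M = γ z := by
        rw [hM]; field_simp [hβ'z.ne']
      have hmem : γ z ∈ Set.Icc (μ * γ 0 + β' z * 0) (μ * γ M + β' z * M) := by
        constructor
        · simp [hγ0, hγnonneg z hz.le]
        · nlinarith [hγnonneg M hM0, hμ.le]
      obtain ⟨q, hq, hqe⟩ := hsub hmem
      exact ⟨q, fun _ => ⟨hq.1, hqe⟩⟩
    · exact ⟨0, fun h => absurd h hz⟩
  choose P hP using hex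
  have hPnn : ∀ z : ℝ, 0 < z → 0 ≤ P z := fun z hz => (hP z hz).1
  have hPeq : ∀ z : ℝ, 0 < z → μ * γ (P z) + β' z * P z = γ z := fun z hz => (hP z hz).2
  have hPpos : ∀ z : ℝ, 0 < z → 0 < P z := by
    intro z hz
    rcases lt_or_eq_of_le (hPnn z hz) with h | h
    · exact h
    · exfalso
      have := hPeq z hz
      rw [← h] at this
      simp [hγ0] at this
      exact absurd this.symm (ne_of_gt (hγpos z hz))
  -- comparison with the root
  have hle : ∀ z q : ℝ, 0 < z → 0 ≤ q → μ * γ q + β' z * q ≤ γ z → q ≤ P z := by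
    intro z q hz hq hineq
    by_contra h
    push_neg at h
    have := Fmono z (P z) q hz (hPnn z hz) h
    rw [hPeq z hz] at this
    exact absurd hineq (not_le.mpr this)
  have hge : ∀ z q : ℝ, 0 < z → 0 ≤ q → γ z ≤ μ * γ q + β' z * q → P z ≤ q := by
    intro z q hz hq hineq
    by_contra h
    push_neg at h
    have := Fmono z q (P z) hz hq h
    rw [hPeq z hz] at this
    exact absurd hineq (not_le.mpr this)
  have huniq : ∀ z q : ℝ, 0 < z → 0 ≤ q → μ * γ q + β' z * q = γ z → q = P z := by
    intro z q hz hq heq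
    exact le_antisymm (hle z q hz hq heq.le) (hge z q hz hq heq.ge)
  -- monotonicity of P
  have hPmono : MonotoneOn P (Set.Ioi 0) := by
    intro z1 hz1 z2 hz2 h12
    refine hle z2 (P z1) hz2 (hPnn z1 hz1) ?_
    have hb : β' z2 ≤ β' z1 := hβ'anti hz1 hz2 h12
    have h1 : μ * γ (P z1) + β' z2 * P z1 ≤ μ * γ (P z1) + β' z1 * P z1 := by
      nlinarith [hPnn z1 hz1]
    rw [hPeq z1 hz1] at h1
    exact h1.trans (hγmono (Set.mem_Ici.mpr (le_of_lt (Set.mem_Ioi.mp hz1))) (Set.mem_Ici.mpr (le_of_lt (Set.mem_Ioi.mp hz2))) h12)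
  -- continuity of P on Ioi 0
  have hPcontAt : ∀ z0 : ℝ, 0 < z0 → ContinuousAt P z0 := by
    intro z0 hz0
    have key : ∀ (L : ℝ) (l : Filter ℝ), l.NeBot → l ≤ 𝓝 z0 → (∀ᶠ z in l, 0 < z) →
        Tendsto P l (𝓝 L) → 0 ≤ L → L = P z0 := by
      intro L l hne hl hev hPl hL0
      haveI := hne
      have hid : Tendsto (fun z : ℝ => z) l (𝓝 z0) := tendsto_id.mono_left hl
      have hβ'l : Tendsto β' l (𝓝 (β' z0)) :=
        ((hβ'cont z0 hz0).tendsto).comp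
          (tendsto_nhdsWithin_of_tendsto_nhds_of_eventually_within _ hid hev)
      have hγz : Tendsto (fun z => γ z) l (𝓝 (γ z0)) :=
        ((hγcont z0 hz0.le).tendsto).comp
          (tendsto_nhdsWithin_of_tendsto_nhds_of_eventually_within _ hid
            (hev.mono fun z hz => hz.le))
      have hγP : Tendsto (fun z => γ (P z)) l (𝓝 (γ L)) :=
        ((hγcont L hL0).tendsto).comp
          (tendsto_nhdsWithin_of_tendsto_nhds_of_eventually_within _ hPl
            (hev.mono fun z hz => hPnn z hz))
      have h2 : Tendsto (fun z => μ * γ (P z) + β' z * P z) l (𝓝 (μ * γ L + β' z0 * L)) :=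
        ((hγP.const_mul μ).add (hβ'l.mul hPl))
      have heqev : (fun z => μ * γ (P z) + β' z * P z) =ᶠ[l] fun z => γ z :=
        hev.mono fun z hz => hPeq z hz
      have heq : μ * γ L + β' z0 * L = γ z0 :=
        tendsto_nhds_unique (h2.congr' heqev) hγz
      exact huniq z0 L hz0 hL0 heq
    -- right limit
    have hneR : (Set.Ioo z0 (z0 + 1)).Nonempty := ⟨z0 + 1 / 2, by constructor <;> linarith⟩
    have hmonoR : MonotoneOn P (Set.Ioo z0 (z0 + 1)) :=
      hPmono.mono fun x hx => hz0.trans hx.1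
    have hbddR : BddBelow (P '' Set.Ioo z0 (z0 + 1)) := by
      refine ⟨0, ?_⟩
      rintro y ⟨x, hx, rfl⟩
      exact hPnn x (hz0.trans hx.1)
    have htR := hmonoR.tendsto_nhdsWithin_Ioo_right hneR hbddR
    have hevR : ∀ᶠ z in 𝓝[>] z0, 0 < z := by
      filter_upwards [self_mem_nhdsWithin] with z hz
      exact hz0.trans hz
    have hL0R : 0 ≤ sInf (P '' Set.Ioo z0 (z0 + 1)) := by
      refine le_csInf (hneR.image P) ?_
      rintro y ⟨x, hx, rfl⟩
      exact hPnn x (hz0.trans hx.1)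
    have hRid := key _ (𝓝[>] z0) inferInstance nhdsWithin_le_nhds hevR htR hL0R
    rw [hRid] at htR
    -- left limit
    have hneL : (Set.Ioo (z0 / 2) z0).Nonempty := ⟨3 * z0 / 4, by constructor <;> linarith⟩
    have hmonoL : MonotoneOn P (Set.Ioo (z0 / 2) z0) :=
      hPmono.mono fun x hx => (half_pos hz0).trans hx.1
    have hbddL : BddAbove (P '' Set.Ioo (z0 / 2) z0) := by
      refine ⟨P z0, ?_⟩
      rintro y ⟨x, hx, rfl⟩
      exact hPmono ((half_pos hz0).trans hx.1) hz0 hx.2.le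
    have htL := hmonoL.tendsto_nhdsWithin_Ioo_left hneL hbddL
    have hevL : ∀ᶠ z in 𝓝[<] z0, 0 < z := by
      filter_upwards [Ioo_mem_nhdsLT (half_lt_self hz0)] with z hz
      exact (half_pos hz0).trans hz.1
    have hL0L : 0 ≤ sSup (P '' Set.Ioo (z0 / 2) z0) := by
      have hmem : P (3 * z0 / 4) ∈ P '' Set.Ioo (z0 / 2) z0 :=
        Set.mem_image_of_mem P (by constructor <;> linarith)
      exact (hPnn _ (by linarith)).trans (le_csSup hbddL hmem)
    have hLid := key _ (𝓝[<] z0) inferInstance nhdsWithin_le_nhds hevL htL hL0L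
    rw [hLid] at htL
    refine continuousAt_iff_continuous_left_right.2 ⟨?_, ?_⟩
    · rw [← continuousWithinAt_diff_self, Set.Iic_diff_right]
      exact htL
    · rw [← continuousWithinAt_diff_self, Set.Ici_sdiff_left]
      exact htR
  have hPcont : ContinuousOn P (Set.Ioi 0) := fun z hz =>
    (hPcontAt z hz).continuousWithinAt
  have hinvcont : ContinuousOn (fun s => (P s)⁻¹) (Set.Ioi 0) :=
    hPcont.inv₀ fun z hz => (hPpos z hz).ne'
  -- The function Φ
  set Φ : ℝ → ℝ := fun z => ∫ s in u0..z, (P s)⁻¹ with hΦdef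
  have hsubI : ∀ z : ℝ, 0 < z → Set.uIcc u0 z ⊆ Set.Ioi 0 := by
    intro z hz
    exact Set.OrdConnected.uIcc_subset Set.ordConnected_Ioi hu0 hz
  have hΦderiv : ∀ z : ℝ, 0 < z → HasDerivAt Φ (P z)⁻¹ z := by
    intro z hz
    have hint : IntervalIntegrable (fun s => (P s)⁻¹) MeasureTheory.volume u0 z :=
      (hinvcont.mono (hsubI z hz)).intervalIntegrable
    have hmeas : StronglyMeasurableAtFilter (fun s => (P s)⁻¹) (𝓝 z) MeasureTheory.volume :=
      hinvcont.stronglyMeasurableAtFilter isOpen_Ioi z hz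
    exact intervalIntegral.integral_hasDerivAt_right hint hmeas
      ((hinvcont z hz).continuousAt (Ioi_mem_nhds hz))
  have hΦcont : ContinuousOn Φ (Set.Ioi 0) := fun z hz =>
    (hΦderiv z hz).continuousAt.continuousWithinAt
  -- positivity of u and v
  have huge : ∀ t : ℝ, 0 ≤ t → u0 ≤ u t := by
    intro t ht
    have := humono (Set.mem_Ici.mpr le_rfl) (Set.mem_Ici.mpr ht) ht
    rwa [hu0eq] at this
  have hvge : ∀ t : ℝ, 0 ≤ t → v0 ≤ v t := by
    intro t ht
    have := hvmono (Set.mem_Ici.mpr le_rfl) (Set.mem_Ici.mpr ht) ht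
    rwa [hv0eq] at this
  have hupos : ∀ t : ℝ, 0 ≤ t → 0 < u t := fun t ht => hu0.trans_le (huge t ht)
  have hvpos : ∀ t : ℝ, 0 ≤ t → 0 < v t := fun t ht =>
    (hu0.trans huv0).trans_le (hvge t ht)
  -- nonnegativity of derivatives
  have hderiv_nonneg : ∀ (w w' : ℝ → ℝ), MonotoneOn w (Set.Ici 0) →
      (∀ t : ℝ, 0 < t → HasDerivAt w (w' t) t) → ∀ t : ℝ, 0 < t → 0 ≤ w' t := by
    intro w w' hwmono hw' t ht
    have hs : Tendsto (slope w t) (𝓝[>] t) (𝓝 (w' t)) :=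
      (hasDerivAt_iff_tendsto_slope.mp (hw' t ht)).mono_left
        (nhdsWithin_mono t fun y hy => Set.mem_compl_singleton_iff.mpr
          (ne_of_gt (Set.mem_Ioi.mp hy)))
    refine ge_of_tendsto hs ?_
    filter_upwards [self_mem_nhdsWithin] with y hy
    have hty : t < y := hy
    have hmon : w t ≤ w y := hwmono (Set.mem_Ici.mpr ht.le)
      (Set.mem_Ici.mpr (ht.trans hty).le) hty.le
    rw [slope_def_field]
    exact div_nonneg (sub_nonneg.2 hmon) (sub_nonneg.2 hty.le)
  have hu'nonneg : ∀ t : ℝ, 0 < t → 0 ≤ u' t := hderiv_nonneg u u' humono hu'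
  have hv'nonneg : ∀ t : ℝ, 0 < t → 0 ≤ v' t := hderiv_nonneg v v' hvmono hv'
  -- sub/supersolution vs root
  have hu'le : ∀ t : ℝ, 0 < t → u' t ≤ P (u t) := fun t ht =>
    hle (u t) (u' t) (hupos t ht.le) (hu'nonneg t ht) (hineq1 t ht)
  have hv'ge : ∀ t : ℝ, 0 < t → P (v t) ≤ v' t := fun t ht =>
    hge (v t) (v' t) (hvpos t ht.le) (hv'nonneg t ht) (hineq2 t ht)
  -- monotone quantities
  have hgmono : MonotoneOn (fun t => t - Φ (u t)) (Set.Ici 0) := by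
    have hder : ∀ t : ℝ, t ∈ interior (Set.Ici (0:ℝ)) →
        HasDerivAt (fun t => t - Φ (u t)) (1 - (P (u t))⁻¹ * u' t) t := by
      intro t ht
      rw [interior_Ici] at ht
      exact (hasDerivAt_id t).sub
        (((hΦderiv (u t) (hupos t (le_of_lt ht))).comp t (hu' t ht)))
    refine monotoneOn_of_deriv_nonneg (convex_Ici 0) ?_ ?_ ?_
    · refine continuousOn_id.sub (hΦcont.comp hucont ?_)
      intro t ht
      exact Set.mem_Ioi.mpr (hupos t ht)
    · intro t ht
      exact (hder t ht).differentiableAt.differentiableWithinAt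
    · intro t ht
      rw [(hder t ht).deriv]
      rw [interior_Ici] at ht
      have h1 : (P (u t))⁻¹ * u' t ≤ (P (u t))⁻¹ * P (u t) :=
        mul_le_mul_of_nonneg_left (hu'le t ht) (inv_nonneg.mpr (hPnn _ (hupos t ht.le)))
      rw [inv_mul_cancel₀ (hPpos _ (hupos t ht.le)).ne'] at h1
      linarith
  have hhmono : MonotoneOn (fun t => Φ (v t) - t) (Set.Ici 0) := by
    have hder : ∀ t : ℝ, t ∈ interior (Set.Ici (0:ℝ)) →
        HasDerivAt (fun t => Φ (v t) - t) ((P (v t))⁻¹ * v' t - 1) t := by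
      intro t ht
      rw [interior_Ici] at ht
      exact (((hΦderiv (v t) (hvpos t (le_of_lt ht))).comp t (hv' t ht))).sub
        (hasDerivAt_id t)
    refine monotoneOn_of_deriv_nonneg (convex_Ici 0) ?_ ?_ ?_
    · refine (hΦcont.comp hvcont ?_).sub continuousOn_id
      intro t ht
      exact Set.mem_Ioi.mpr (hvpos t ht)
    · intro t ht
      exact (hder t ht).differentiableAt.differentiableWithinAt
    · intro t ht
      rw [(hder t ht).deriv]
      rw [interior_Ici] at ht
      have h1 : (P (v t))⁻¹ * P (v t) ≤ (P (v t))⁻¹ * v' t :=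
        mul_le_mul_of_nonneg_left (hv'ge t ht) (inv_nonneg.mpr (hPnn _ (hvpos t ht.le)))
      rw [inv_mul_cancel₀ (hPpos _ (hvpos t ht.le)).ne'] at h1
      linarith
  -- Φ is strictly monotone on Ioi 0
  have hΦsmono : StrictMonoOn Φ (Set.Ioi 0) := by
    refine strictMonoOn_of_deriv_pos (convex_Ioi 0) hΦcont ?_
    intro z hz
    rw [interior_Ioi] at hz
    rw [(hΦderiv z hz).deriv]
    exact inv_pos.mpr (hPpos z hz)
  -- Φ v0 > 0
  have hΦv0 : 0 < Φ v0 := by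
    refine intervalIntegral.intervalIntegral_pos_of_pos_on
      ((hinvcont.mono (hsubI v0 (hu0.trans huv0))).intervalIntegrable) ?_ huv0
    intro x hx
    exact inv_pos.mpr (hPpos x (hu0.trans hx.1))
  have hΦu0 : Φ u0 = 0 := intervalIntegral.integral_same
  -- conclusion
  intro t ht
  have h1 : (fun t => t - Φ (u t)) 0 ≤ (fun t => t - Φ (u t)) t :=
    hgmono (Set.mem_Ici.mpr le_rfl) (Set.mem_Ici.mpr ht.le) ht.le
  have h2 : (fun t => Φ (v t) - t) 0 ≤ (fun t => Φ (v t) - t) t :=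
    hhmono (Set.mem_Ici.mpr le_rfl) (Set.mem_Ici.mpr ht.le) ht.le
  simp only [hu0eq, hv0eq, hΦu0, sub_zero, zero_sub, neg_zero] at h1 h2
  -- h1 : 0 ≤ t - Φ (u t), h2 : Φ v0 ≤ Φ (v t) - t
  by_contra hcon
  push_neg at hcon
  have hΦle : Φ (v t) ≤ Φ (u t) := by
    rcases eq_or_lt_of_le hcon with h | h
    · rw [h]
    · exact (hΦsmono (Set.mem_Ioi.mpr (hvpos t ht.le))
        (Set.mem_Ioi.mpr (hupos t ht.le)) h).le
  linarith
end

section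
/- Let μ > 0, β' > 0 non-increasing, γ non-decreasing. If u, v : [0,T] → ℝ are C¹, u' ≥ 0, u ≤ v on [0,T], and μ(γ(u'(t)) - γ(v'(t))) + β'(u(t))u'(t) - β'(v(t))v'(t) ≤ γ(u(t)) - γ(v(t)) ≤ 0 for all t, then u'(t) ≤ v'(t) for all t ∈ [0,T]. -/
theorem Monotone.strictMono_const_mul_add_mul {γ : ℝ → ℝ} (hγ : Monotone γ) {μ d : ℝ}
    (hμ : 0 ≤ μ) (hd : 0 < d) : StrictMono fun r => μ * γ r + d * r :=
  (hγ.const_mul hμ).add_strictMono (strictMono_mul_left_of_pos hd)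

/-- Replacing the coefficient `c` of `p` by the smaller `d` (allowed as `p ≥ 0`) makes the
left side a difference of values of the strictly monotone `r ↦ μ γ r + d r`. -/
theorem le_of_const_mul_sub_add_mul_sub_mul_nonpos {γ : ℝ → ℝ} (hγ : Monotone γ)
    {μ c d p q : ℝ} (hμ : 0 ≤ μ) (hd : 0 < d) (hdc : d ≤ c) (hp : 0 ≤ p)
    (h : μ * (γ p - γ q) + c * p - d * q ≤ 0) : p ≤ q := by
  have hdp : d * p ≤ c * p := mul_le_mul_of_nonneg_right hdc hp
  refine ((hγ.strictMono_const_mul_add_mul hμ hd).le_iff_le).1 ?_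
  linarith

theorem stmt_7_general (γ β' : ℝ → ℝ) (μ T : ℝ) (hμ : 0 < μ)
    (hβ'pos : ∀ s : ℝ, 0 < β' s) (hβ'anti : Antitone β') (hγmono : Monotone γ)
    (u v u' v' : ℝ → ℝ)
    (hu'nn : ∀ t ∈ Set.Icc (0:ℝ) T, 0 ≤ u' t)
    (hle : ∀ t ∈ Set.Icc (0:ℝ) T, u t ≤ v t)
    (hineq : ∀ t ∈ Set.Icc (0:ℝ) T,
      μ * (γ (u' t) - γ (v' t)) + β' (u t) * u' t - β' (v t) * v' t
        ≤ γ (u t) - γ (v t) ∧ γ (u t) - γ (v t) ≤ 0) :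
    ∀ t ∈ Set.Icc (0:ℝ) T, u' t ≤ v' t := by
  intro t ht
  exact le_of_const_mul_sub_add_mul_sub_mul_nonpos hγmono hμ.le (hβ'pos (v t))
    (hβ'anti (hle t ht)) (hu'nn t ht) ((hineq t ht).1.trans (hineq t ht).2)

/-- Key step of the ODE comparison lemma: the differential inequality implies
`u' ≤ v'` on `[0,T]`. -/
theorem stmt_7 (γ β' : ℝ → ℝ) (μ T : ℝ) (hT : 0 < T) (hμ : 0 < μ)
    (hβ'pos : ∀ s : ℝ, 0 < β' s) (hβ'anti : Antitone β') (hγmono : Monotone γ)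
    (u v u' v' : ℝ → ℝ)
    (hu : ∀ t ∈ Set.Icc (0:ℝ) T, HasDerivAt u (u' t) t)
    (hv : ∀ t ∈ Set.Icc (0:ℝ) T, HasDerivAt v (v' t) t)
    (hu'nn : ∀ t ∈ Set.Icc (0:ℝ) T, 0 ≤ u' t)
    (hle : ∀ t ∈ Set.Icc (0:ℝ) T, u t ≤ v t)
    (hineq : ∀ t ∈ Set.Icc (0:ℝ) T,
      μ * (γ (u' t) - γ (v' t)) + β' (u t) * u' t - β' (v t) * v' t
        ≤ γ (u t) - γ (v t) ∧ γ (u t) - γ (v t) ≤ 0) :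
    ∀ t ∈ Set.Icc (0:ℝ) T, u' t ≤ v' t :=
  stmt_7_general γ β' μ T hμ hβ'pos hβ'anti hγmono u v u' v' hu'nn hle hineq
end
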